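/- Suppose X and Y are (unconditionally) independent. Then mutual information is superadditive: I((X,Y);Z) ≥ I(X;Z) + I(Y;Z), where (X,Y) denotes the joint random variable. -/
import Mathlib


open scoped BigOperators

noncomputable section

variable {Ω : Type*} [Fintype Ω]

/-- `μ` is a probability mass function on the finite sample space `Ω`. -/
def IsPmf (μ : Ω → ℝ) : Prop := (∀ ω, 0 ≤ μ ω) ∧ ∑ ω, μ ω = 1

open Classical in
/-- Probability of the event `A` under the pmf `μ`. -/
def pr (μ : Ω → ℝ) (A : Ω → Prop) : ℝ := ∑ ω, if A ω then μ ω else 0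

/-- Conditional probability of `A` given `B` (with the convention `x / 0 = 0`). -/
def cpr (μ : Ω → ℝ) (A B : Ω → Prop) : ℝ := pr μ (fun ω => A ω ∧ B ω) / pr μ B

open Classical in
/-- Mutual information between the random variables `X` and `Y`,
`I(X;Y) = Σ_{x,y} P[X=x,Y=y] log( P[X=x,Y=y] / (P[X=x]·P[Y=y]) )`. -/
def mi (μ : Ω → ℝ) {S T : Type*} (X : Ω → S) (Y : Ω → T) : ℝ :=
  ∑ x ∈ Finset.univ.image X, ∑ y ∈ Finset.univ.image Y,
    pr μ (fun ω => X ω = x ∧ Y ω = y) *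
      Real.log (pr μ (fun ω => X ω = x ∧ Y ω = y) /
        (pr μ (fun ω => X ω = x) * pr μ (fun ω => Y ω = y)))

open Classical in
/-- Mutual information between `X` and `Y` conditioned on the event `B`,
`I(X;Y|B) = Σ_{x,y} P[X=x,Y=y|B] log( P[X=x,Y=y|B] / (P[X=x|B]·P[Y=y|B]) )`. -/
def miOn (μ : Ω → ℝ) {S T : Type*} (X : Ω → S) (Y : Ω → T) (B : Ω → Prop) : ℝ :=
  ∑ x ∈ Finset.univ.image X, ∑ y ∈ Finset.univ.image Y,
    cpr μ (fun ω => X ω = x ∧ Y ω = y) B *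
      Real.log (cpr μ (fun ω => X ω = x ∧ Y ω = y) B /
        (cpr μ (fun ω => X ω = x) B * cpr μ (fun ω => Y ω = y) B))

open Classical in
/-- Conditional mutual information `I(X;Y|Z) = E_Z[ I(X;Y|Z=z) ]`. -/
def cmi (μ : Ω → ℝ) {S T U : Type*} (X : Ω → S) (Y : Ω → T) (Z : Ω → U) : ℝ :=
  ∑ z ∈ Finset.univ.image Z,
    pr μ (fun ω => Z ω = z) * miOn μ X Y (fun ω => Z ω = z)

/-- `X` and `Y` are (unconditionally) independent under `μ`. -/
def Indep (μ : Ω → ℝ) {S T : Type*} (X : Ω → S) (Y : Ω → T) : Prop :=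
  ∀ (x : S) (y : T),
    pr μ (fun ω => X ω = x ∧ Y ω = y) = pr μ (fun ω => X ω = x) * pr μ (fun ω => Y ω = y)

section Aux

open Classical Finset

variable {μ : Ω → ℝ}

lemma pr_nonneg (h0 : ∀ ω, 0 ≤ μ ω) (A : Ω → Prop) : 0 ≤ pr μ A := by
  unfold pr
  exact Finset.sum_nonneg fun ω _ => by split <;> simp [h0 ω]

lemma pr_congr (A B : Ω → Prop) (h : ∀ ω, A ω ↔ B ω) : pr μ A = pr μ B := by
  unfold pr
  exact Finset.sum_congr rfl fun ω _ => by simp [h ω]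

lemma pr_mono (h0 : ∀ ω, 0 ≤ μ ω) (A B : Ω → Prop) (h : ∀ ω, A ω → B ω) :
    pr μ A ≤ pr μ B := by
  unfold pr
  refine Finset.sum_le_sum fun ω _ => ?_
  by_cases hA : A ω
  · simp [hA, h ω hA]
  · simp only [hA, if_false]
    split <;> simp [h0 ω]

lemma pr_empty (A : Ω → Prop) (h : ∀ ω, ¬ A ω) : pr μ A = 0 := by
  unfold pr
  exact Finset.sum_eq_zero fun ω _ => by simp [h ω]

lemma pr_split {V : Type*} (W : Ω → V) (A : Ω → Prop) :
    pr μ A = ∑ v ∈ Finset.univ.image W, pr μ (fun ω => A ω ∧ W ω = v) := by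
  unfold pr
  rw [Finset.sum_comm]
  refine Finset.sum_congr rfl fun ω _ => ?_
  by_cases hA : A ω
  · simp only [hA, true_and]
    rw [Finset.sum_ite_eq (Finset.univ.image W) (W ω) (fun _ => μ ω)]
    simp
  · simp [hA]

lemma pr_univ (h1 : ∑ ω, μ ω = 1) : pr μ (fun _ => True) = 1 := by
  simpa [pr] using h1

end Aux

lemma key_ineq (p px py pz pxz pyz : ℝ) (hp : 0 ≤ p)
    (hx : p ≤ px) (hy : p ≤ py) (hz : p ≤ pz) (hxz : p ≤ pxz) (hyz : p ≤ pyz)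
    (hxz0 : 0 ≤ pxz) (hyz0 : 0 ≤ pyz) (hz0 : 0 ≤ pz) :
    p - pxz * pyz / pz ≤
      p * Real.log (p / (px * py * pz)) - p * Real.log (pxz / (px * pz))
        - p * Real.log (pyz / (py * pz)) := by
  rcases hp.eq_or_lt with h0 | h0
  · subst h0
    have : (0:ℝ) ≤ pxz * pyz / pz := by positivity
    simp only [zero_mul, zero_sub, sub_zero]
    linarith
  · have hxp : 0 < px := lt_of_lt_of_le h0 hx
    have hyp : 0 < py := lt_of_lt_of_le h0 hy
    have hzp : 0 < pz := lt_of_lt_of_le h0 hz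
    have hxzp : 0 < pxz := lt_of_lt_of_le h0 hxz
    have hyzp : 0 < pyz := lt_of_lt_of_le h0 hyz
    set a : ℝ := pxz * pyz / pz with ha
    have hap : 0 < a := by positivity
    have hlog : Real.log (p / (px * py * pz)) - Real.log (pxz / (px * pz))
        - Real.log (pyz / (py * pz)) = Real.log (p / a) := by
      rw [Real.log_div h0.ne' hap.ne', ha, Real.log_div h0.ne' (by positivity),
        Real.log_div hxzp.ne' (by positivity), Real.log_div hyzp.ne' (by positivity),
        Real.log_div (by positivity) hzp.ne', Real.log_mul hxzp.ne' hyzp.ne',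
        Real.log_mul (by positivity) hzp.ne', Real.log_mul hxp.ne' hyp.ne',
        Real.log_mul hxp.ne' hzp.ne', Real.log_mul hyp.ne' hzp.ne']
      ring
    rw [show p * Real.log (p / (px * py * pz)) - p * Real.log (pxz / (px * pz))
        - p * Real.log (pyz / (py * pz))
        = p * (Real.log (p / (px * py * pz)) - Real.log (pxz / (px * pz))
          - Real.log (pyz / (py * pz))) by ring, hlog]
    have hls : Real.log (a / p) ≤ a / p - 1 :=
      Real.log_le_sub_one_of_pos (by positivity)
    have : Real.log (p / a) = - Real.log (a / p) := by
      rw [← Real.log_inv]; congr 1; field_simp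
    rw [this]
    have h2 : p * (a / p - 1) = a - p := by field_simp
    nlinarith [mul_le_mul_of_nonneg_left hls hp]

section Expand
open Classical Finset
variable {μ : Ω → ℝ} {S T U : Type*}

lemma mi_expand (X : Ω → S) (Y : Ω → T) (Z : Ω → U) :
    mi μ X Z = ∑ x ∈ Finset.univ.image X, ∑ y ∈ Finset.univ.image Y,
      ∑ z ∈ Finset.univ.image Z,
        pr μ (fun ω => (X ω = x ∧ Y ω = y) ∧ Z ω = z) *
          Real.log (pr μ (fun ω => X ω = x ∧ Z ω = z) /
            (pr μ (fun ω => X ω = x) * pr μ (fun ω => Z ω = z))) := by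
  unfold mi
  refine Finset.sum_congr rfl fun x _ => ?_
  rw [Finset.sum_comm]
  refine Finset.sum_congr rfl fun z _ => ?_
  have hsplit : pr μ (fun ω => X ω = x ∧ Z ω = z)
      = ∑ y ∈ Finset.univ.image Y, pr μ (fun ω => (X ω = x ∧ Y ω = y) ∧ Z ω = z) := by
    rw [pr_split Y (fun ω => X ω = x ∧ Z ω = z)]
    exact Finset.sum_congr rfl fun y _ => pr_congr _ _ (by tauto)
  rw [hsplit, Finset.sum_mul, ← hsplit]

lemma mi_pair_expand (X : Ω → S) (Y : Ω → T) (Z : Ω → U) :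
    mi μ (fun ω => (X ω, Y ω)) Z
      = ∑ x ∈ Finset.univ.image X, ∑ y ∈ Finset.univ.image Y,
          ∑ z ∈ Finset.univ.image Z,
        pr μ (fun ω => (X ω = x ∧ Y ω = y) ∧ Z ω = z) *
          Real.log (pr μ (fun ω => (X ω = x ∧ Y ω = y) ∧ Z ω = z) /
            (pr μ (fun ω => X ω = x ∧ Y ω = y) * pr μ (fun ω => Z ω = z))) := by
  unfold mi
  refine Eq.trans (Finset.sum_subset (s₂ := (Finset.univ.image X) ×ˢ (Finset.univ.image Y)) ?_ ?_) ?_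
  · intro w hw
    simp only [Finset.mem_image, Finset.mem_product] at *
    obtain ⟨ω, _, rfl⟩ := hw
    exact ⟨⟨ω, by simp⟩, ⟨ω, by simp⟩⟩
  · intro w _ hw
    refine Finset.sum_eq_zero fun z _ => ?_
    have : pr μ (fun ω => (X ω, Y ω) = w ∧ Z ω = z) = 0 := by
      refine pr_empty _ fun ω ⟨h1, _⟩ => hw ?_
      simp only [Finset.mem_image]
      exact ⟨ω, Finset.mem_univ ω, h1⟩
    rw [this, zero_mul]
  · rw [Finset.sum_product]
    refine Finset.sum_congr rfl fun x _ => ?_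
    refine Finset.sum_congr rfl fun y _ => ?_
    refine Finset.sum_congr rfl fun z _ => ?_
    have h1 : pr μ (fun ω => (X ω, Y ω) = (x, y) ∧ Z ω = z)
        = pr μ (fun ω => (X ω = x ∧ Y ω = y) ∧ Z ω = z) :=
      pr_congr _ _ (fun ω => by simp [Prod.ext_iff])
    have h2 : pr μ (fun ω => (X ω, Y ω) = (x, y))
        = pr μ (fun ω => X ω = x ∧ Y ω = y) :=
      pr_congr _ _ (fun ω => by simp [Prod.ext_iff])
    rw [h1, h2]

end Expand

section Sums
open Classical Finset
variable {μ : Ω → ℝ} {S T U : Type*}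

lemma sum_marg (X : Ω → S) (Z : Ω → U) (z : U) :
    ∑ x ∈ Finset.univ.image X, pr μ (fun ω => X ω = x ∧ Z ω = z)
      = pr μ (fun ω => Z ω = z) := by
  rw [pr_split X (fun ω => Z ω = z)]
  exact Finset.sum_congr rfl fun x _ => pr_congr _ _ (by tauto)

lemma sum_pr_one (h1 : ∑ ω, μ ω = 1) (X : Ω → S) :
    ∑ x ∈ Finset.univ.image X, pr μ (fun ω => X ω = x) = 1 := by
  rw [← pr_univ h1, pr_split X (fun _ => True)]
  exact Finset.sum_congr rfl fun x _ => pr_congr _ _ (by tauto)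

lemma sum_triple_one (h1 : ∑ ω, μ ω = 1) (X : Ω → S) (Y : Ω → T) (Z : Ω → U) :
    ∑ x ∈ Finset.univ.image X, ∑ y ∈ Finset.univ.image Y, ∑ z ∈ Finset.univ.image Z,
      pr μ (fun ω => (X ω = x ∧ Y ω = y) ∧ Z ω = z) = 1 := by
  have e1 : ∀ (x : S) (y : T), ∑ z ∈ Finset.univ.image Z,
      pr μ (fun ω => (X ω = x ∧ Y ω = y) ∧ Z ω = z)
      = pr μ (fun ω => X ω = x ∧ Y ω = y) := fun x y =>
    (pr_split Z (fun ω => X ω = x ∧ Y ω = y)).symm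
  have e2 : ∀ (x : S), ∑ y ∈ Finset.univ.image Y, pr μ (fun ω => X ω = x ∧ Y ω = y)
      = pr μ (fun ω => X ω = x) := fun x => (pr_split Y (fun ω => X ω = x)).symm
  calc ∑ x ∈ Finset.univ.image X, ∑ y ∈ Finset.univ.image Y,
        ∑ z ∈ Finset.univ.image Z, pr μ (fun ω => (X ω = x ∧ Y ω = y) ∧ Z ω = z)
      = ∑ x ∈ Finset.univ.image X, ∑ y ∈ Finset.univ.image Y,
          pr μ (fun ω => X ω = x ∧ Y ω = y) :=
        Finset.sum_congr rfl fun x _ => Finset.sum_congr rfl fun y _ => e1 x y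
    _ = ∑ x ∈ Finset.univ.image X, pr μ (fun ω => X ω = x) :=
        Finset.sum_congr rfl fun x _ => e2 x
    _ = 1 := sum_pr_one h1 X

lemma sum_ratio_one (h0 : ∀ ω, 0 ≤ μ ω) (h1 : ∑ ω, μ ω = 1)
    (X : Ω → S) (Y : Ω → T) (Z : Ω → U) :
    ∑ x ∈ Finset.univ.image X, ∑ y ∈ Finset.univ.image Y, ∑ z ∈ Finset.univ.image Z,
      pr μ (fun ω => X ω = x ∧ Z ω = z) * pr μ (fun ω => Y ω = y ∧ Z ω = z)
        / pr μ (fun ω => Z ω = z) = 1 := by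
  calc ∑ x ∈ Finset.univ.image X, ∑ y ∈ Finset.univ.image Y,
        ∑ z ∈ Finset.univ.image Z,
        pr μ (fun ω => X ω = x ∧ Z ω = z) * pr μ (fun ω => Y ω = y ∧ Z ω = z)
          / pr μ (fun ω => Z ω = z)
      = ∑ x ∈ Finset.univ.image X, ∑ z ∈ Finset.univ.image Z,
          ∑ y ∈ Finset.univ.image Y,
          pr μ (fun ω => X ω = x ∧ Z ω = z) * pr μ (fun ω => Y ω = y ∧ Z ω = z)
            / pr μ (fun ω => Z ω = z) :=
        Finset.sum_congr rfl fun x _ => Finset.sum_comm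
    _ = ∑ z ∈ Finset.univ.image Z, ∑ x ∈ Finset.univ.image X,
          ∑ y ∈ Finset.univ.image Y,
          pr μ (fun ω => X ω = x ∧ Z ω = z) * pr μ (fun ω => Y ω = y ∧ Z ω = z)
            / pr μ (fun ω => Z ω = z) := Finset.sum_comm
    _ = ∑ z ∈ Finset.univ.image Z, pr μ (fun ω => Z ω = z) := by
        refine Finset.sum_congr rfl fun z _ => ?_
        calc ∑ x ∈ Finset.univ.image X, ∑ y ∈ Finset.univ.image Y,
              pr μ (fun ω => X ω = x ∧ Z ω = z) * pr μ (fun ω => Y ω = y ∧ Z ω = z)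
                / pr μ (fun ω => Z ω = z)
            = ∑ x ∈ Finset.univ.image X,
                (pr μ (fun ω => X ω = x ∧ Z ω = z) *
                  ∑ y ∈ Finset.univ.image Y, pr μ (fun ω => Y ω = y ∧ Z ω = z))
                  / pr μ (fun ω => Z ω = z) := by
              refine Finset.sum_congr rfl fun x _ => ?_
              rw [← Finset.sum_div, ← Finset.mul_sum]
          _ = ((∑ x ∈ Finset.univ.image X, pr μ (fun ω => X ω = x ∧ Z ω = z)) *
                ∑ y ∈ Finset.univ.image Y, pr μ (fun ω => Y ω = y ∧ Z ω = z))
                / pr μ (fun ω => Z ω = z) := by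
              rw [← Finset.sum_div, ← Finset.sum_mul]
          _ = pr μ (fun ω => Z ω = z) * pr μ (fun ω => Z ω = z)
                / pr μ (fun ω => Z ω = z) := by
              rw [sum_marg X Z z, sum_marg Y Z z]
          _ = pr μ (fun ω => Z ω = z) := by
              rcases eq_or_ne (pr μ (fun ω => Z ω = z)) 0 with hz | hz
              · simp [hz]
              · field_simp
    _ = 1 := sum_pr_one h1 Z

end Sums

/-- If `X` and `Y` are (unconditionally) independent, then mutual information is
superadditive: `I((X,Y);Z) ≥ I(X;Z) + I(Y;Z)`. -/
theorem mi_superadditive_of_indep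
    {S T U : Type*} (μ : Ω → ℝ) (hμ : IsPmf μ)
    (X : Ω → S) (Y : Ω → T) (Z : Ω → U) (h : Indep μ X Y) :
    mi μ X Z + mi μ Y Z ≤ mi μ (fun ω => (X ω, Y ω)) Z := by
  classical
  obtain ⟨h0, h1⟩ := hμ
  have hmiY : mi μ Y Z = ∑ x ∈ Finset.univ.image X, ∑ y ∈ Finset.univ.image Y,
      ∑ z ∈ Finset.univ.image Z,
        pr μ (fun ω => (X ω = x ∧ Y ω = y) ∧ Z ω = z) *
          Real.log (pr μ (fun ω => Y ω = y ∧ Z ω = z) /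
            (pr μ (fun ω => Y ω = y) * pr μ (fun ω => Z ω = z))) := by
    rw [mi_expand Y X Z, Finset.sum_comm]
    refine Finset.sum_congr rfl fun x _ => Finset.sum_congr rfl fun y _ =>
      Finset.sum_congr rfl fun z _ => ?_
    congr 1
    exact pr_congr _ _ (by tauto)
  rw [mi_expand X Y Z, hmiY, mi_pair_expand X Y Z]
  have hind : ∀ (x : S) (y : T), pr μ (fun ω => X ω = x ∧ Y ω = y)
      = pr μ (fun ω => X ω = x) * pr μ (fun ω => Y ω = y) := h
  simp only [hind]
  have key : ∀ x ∈ Finset.univ.image X, ∀ y ∈ Finset.univ.image Y,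
      ∀ z ∈ Finset.univ.image Z,
      pr μ (fun ω => (X ω = x ∧ Y ω = y) ∧ Z ω = z)
        - pr μ (fun ω => X ω = x ∧ Z ω = z) * pr μ (fun ω => Y ω = y ∧ Z ω = z)
            / pr μ (fun ω => Z ω = z)
      ≤ pr μ (fun ω => (X ω = x ∧ Y ω = y) ∧ Z ω = z) *
          Real.log (pr μ (fun ω => (X ω = x ∧ Y ω = y) ∧ Z ω = z) /
            (pr μ (fun ω => X ω = x) * pr μ (fun ω => Y ω = y) * pr μ (fun ω => Z ω = z)))
        - pr μ (fun ω => (X ω = x ∧ Y ω = y) ∧ Z ω = z) *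
          Real.log (pr μ (fun ω => X ω = x ∧ Z ω = z) /
            (pr μ (fun ω => X ω = x) * pr μ (fun ω => Z ω = z)))
        - pr μ (fun ω => (X ω = x ∧ Y ω = y) ∧ Z ω = z) *
          Real.log (pr μ (fun ω => Y ω = y ∧ Z ω = z) /
            (pr μ (fun ω => Y ω = y) * pr μ (fun ω => Z ω = z))) := by
    intro x _ y _ z _
    refine key_ineq _ _ _ _ _ _ (pr_nonneg h0 _) (pr_mono h0 _ _ (by tauto))
      (pr_mono h0 _ _ (by tauto)) (pr_mono h0 _ _ (by tauto))
      (pr_mono h0 _ _ (by tauto)) (pr_mono h0 _ _ (by tauto))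
      (pr_nonneg h0 _) (pr_nonneg h0 _) (pr_nonneg h0 _)
  have hle : ∑ x ∈ Finset.univ.image X, ∑ y ∈ Finset.univ.image Y,
      ∑ z ∈ Finset.univ.image Z,
      (pr μ (fun ω => (X ω = x ∧ Y ω = y) ∧ Z ω = z)
        - pr μ (fun ω => X ω = x ∧ Z ω = z) * pr μ (fun ω => Y ω = y ∧ Z ω = z)
            / pr μ (fun ω => Z ω = z))
      ≤ ∑ x ∈ Finset.univ.image X, ∑ y ∈ Finset.univ.image Y,
          ∑ z ∈ Finset.univ.image Z,
      (pr μ (fun ω => (X ω = x ∧ Y ω = y) ∧ Z ω = z) *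
          Real.log (pr μ (fun ω => (X ω = x ∧ Y ω = y) ∧ Z ω = z) /
            (pr μ (fun ω => X ω = x) * pr μ (fun ω => Y ω = y) * pr μ (fun ω => Z ω = z)))
        - pr μ (fun ω => (X ω = x ∧ Y ω = y) ∧ Z ω = z) *
          Real.log (pr μ (fun ω => X ω = x ∧ Z ω = z) /
            (pr μ (fun ω => X ω = x) * pr μ (fun ω => Z ω = z)))
        - pr μ (fun ω => (X ω = x ∧ Y ω = y) ∧ Z ω = z) *
          Real.log (pr μ (fun ω => Y ω = y ∧ Z ω = z) /
            (pr μ (fun ω => Y ω = y) * pr μ (fun ω => Z ω = z)))) :=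
    Finset.sum_le_sum fun x hx => Finset.sum_le_sum fun y hy =>
      Finset.sum_le_sum fun z hz => key x hx y hy z hz
  simp only [Finset.sum_sub_distrib] at hle
  rw [sum_triple_one h1 X Y Z, sum_ratio_one h0 h1 X Y Z] at hle
  linarith
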